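/- Gluing construction consistency: the inverse of the bijection τ ↦ (ℓ(τ), b(τ)) on discrete planar trees with k leaves can be realized iteratively: start from a single branch of length ℓ_1 (the path to leaf 1), and for i = 1, ..., k−1, graft a new branch of length ℓ_{i+1} − b_i at the right-most vertex at height b_i of the current tree, as a new last child. After step i, the resulting tree has exactly i+1 leaves with heights ℓ_1, ..., ℓ_{i+1} and consecutive-MRCA heights b_1, ..., b_i. -/

import Mathlib

open scoped Classical

noncomputable section

/-- A (finite) rooted planar tree: prefix-closed finite set of words over ℕ containing
the root, with consecutively indexed children. -/
def IsPlanarTree (τ : Finset (List ℕ)) : Prop :=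
  [] ∈ τ ∧ (∀ v w : List ℕ, v <+: w → w ∈ τ → v ∈ τ) ∧
    ∀ v : List ℕ, ∃ d : ℕ, ∀ i : ℕ, v ++ [i] ∈ τ ↔ i < d

/-- The leaves of a set of words: its maximal elements for the prefix order. -/
def leavesOf (s : Finset (List ℕ)) : Finset (List ℕ) :=
  s.filter fun v => ∀ w ∈ s, v <+: w → w = v

/-- Length of the longest common prefix of two words (generation of the MRCA). -/
def commonPrefixLen : List ℕ → List ℕ → ℕ
  | a :: v, b :: w => if a = b then commonPrefixLen v w + 1 else 0
  | _, _ => 0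

/-- The `i`-th leaf of a tree with `k` leaves, in lexicographic order. -/
def leafVec (τ : Finset (List ℕ)) {k : ℕ} (h : (leavesOf τ).card = k) (i : Fin k) :
    List ℕ :=
  ((leavesOf τ).orderIsoOfFin h i : List ℕ)

/-- The lexicographically largest (right-most) vertex of `τ` at generation `n`. -/
def rightmostAt (τ : Finset (List ℕ)) (n : ℕ) : List ℕ :=
  ((τ.filter fun w => w.length = n).max).unbotD []

/-- The out-degree of `v` in `τ`. -/
def degreeOf (τ : Finset (List ℕ)) (v : List ℕ) : ℕ :=
  (τ.filter fun w => ∃ i, w = v ++ [i]).card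

/-- The path of `m` vertices grafted at `v` as its child of label `i`. -/
def branchFrom (v : List ℕ) (i m : ℕ) : Finset (List ℕ) :=
  ((List.range m).map fun j => v ++ [i] ++ List.replicate j 0).toFinset

/-- The iterative gluing construction: start from a single branch of length `ℓ 0`, and at
step `i + 1` graft a branch of length `ℓ (i+1) − b i` at the right-most vertex at height
`b i` of the current tree, as a new last child. -/
def glueTree (ℓ b : ℕ → ℕ) : ℕ → Finset (List ℕ)
  | 0 => ((List.range (ℓ 0 + 1)).map fun j => List.replicate j 0).toFinset
  | i + 1 =>
      let τ := glueTree ℓ b i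
      let v := rightmostAt τ (b i)
      τ ∪ branchFrom v (degreeOf τ v) (ℓ (i + 1) - b i)

/-!
The leaves of the glued tree are explicit: leaf `0` is the word `0 ⋯ 0` of length `ℓ 0`, and
leaf `i + 1` agrees with leaf `i` below height `b i`, carries `e + 1` at height `b i` where leaf
`i` carries `e`, and continues with zeros. Consecutive leaves therefore fork at height `b i` with
the later one to the right, and forking to the right is transitive, so the leaves are pairwise
prefix-incomparable and lexicographically increasing. Hence the prefix closure of leaves
`0, …, i` has exactly these leaves, in this order; every vertex at height `b i` lies weakly to
the left of the ancestor `V` of leaf `i` at that height, and the children of `V` are labelled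
`0, …, e`. So step `i + 1` of the construction grafts exactly the new part of leaf `i + 1`, and
by induction the constructed tree is this prefix closure.
-/

namespace List

variable {α : Type*}

def BranchesLeft [LT α] (u w : List α) : Prop :=
  ∃ p a c s t, a < c ∧ u = p ++ a :: s ∧ w = p ++ c :: t

namespace BranchesLeft

variable {u v w : List α}

theorem trans [Preorder α] (huv : BranchesLeft u v) (hvw : BranchesLeft v w) :
    BranchesLeft u w := by
  obtain ⟨p, a, c, s, t, hac, rfl, hv⟩ := huv
  obtain ⟨q, d, e, r, x, hde, hv', rfl⟩ := hvw
  rcases append_eq_append_iff.1 (hv.symm.trans hv') with ⟨y, rfl, hy⟩ | ⟨y, rfl, hy⟩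
  · cases y with
    | nil =>
      obtain ⟨rfl, -⟩ : c = d ∧ t = r := by simpa using hy
      exact ⟨p, a, e, s, x, hac.trans hde, rfl, by simp⟩
    | cons y ys =>
      obtain ⟨rfl, -⟩ : c = y ∧ t = ys ++ d :: r := by simpa using hy
      exact ⟨p, a, c, s, ys ++ e :: x, hac, rfl, by simp⟩
  · cases y with
    | nil =>
      obtain ⟨rfl, -⟩ : d = c ∧ r = t := by simpa using hy
      exact ⟨q, a, e, s, x, hac.trans hde, by simp, rfl⟩
    | cons y ys =>
      obtain ⟨rfl, -⟩ : d = y ∧ r = ys ++ c :: t := by simpa using hy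
      exact ⟨q, d, e, ys ++ a :: s, x, hde, by simp, rfl⟩

theorem lt [LT α] (h : BranchesLeft u w) : u < w := by
  obtain ⟨p, a, c, s, t, hac, rfl, rfl⟩ := h
  exact Lex.append_left _ (Lex.rel hac) p

theorem not_isPrefix [Preorder α] (h : BranchesLeft u w) : ¬u <+: w ∧ ¬w <+: u := by
  obtain ⟨p, a, c, s, t, hac, rfl, rfl⟩ := h
  simp [prefix_append_right_inj, cons_prefix_cons, hac.ne, hac.ne']

theorem take [LT α] (h : BranchesLeft u w) (n : ℕ) :
    u.take n = w.take n ∨ BranchesLeft (u.take n) (w.take n) := by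
  obtain ⟨p, a, c, s, t, hac, rfl, rfl⟩ := h
  rcases le_or_gt n p.length with hn | hn
  · left
    rw [take_append_of_le_length hn, take_append_of_le_length hn]
  · right
    obtain ⟨k, rfl⟩ : ∃ k, n = p.length + (k + 1) := ⟨n - p.length - 1, by omega⟩
    rw [take_length_add_append, take_length_add_append, take_succ_cons, take_succ_cons]
    exact ⟨p, a, c, _, _, hac, rfl, rfl⟩

theorem take_le [LinearOrder α] (h : BranchesLeft u w) (n : ℕ) : u.take n ≤ w.take n :=
  (h.take n).elim le_of_eq fun h' => h'.lt.le

end BranchesLeft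

theorem le_of_append_singleton_le [LinearOrder α] {p : List α} {c d : α}
    (h : p ++ [c] ≤ p ++ [d]) : c ≤ d :=
  le_of_not_gt fun hdc => not_lt_of_ge h (Lex.append_left _ (Lex.rel hdc) p)

theorem append_singleton_prefix_append_cons (p s : List α) (a : α) : p ++ [a] <+: p ++ a :: s :=
  ⟨s, by simp⟩

theorem eq_take_append_getD_cons_drop {l : List α} {n : ℕ} (d : α) (h : n < l.length) :
    l = l.take n ++ l.getD n d :: l.drop (n + 1) := by
  rw [getD_eq_getElem _ _ h, getElem_cons_drop, take_append_drop]

theorem isPrefix_append_cons_replicate_iff {w v : List α} {a z : α} {n : ℕ} :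
    w <+: v ++ a :: replicate n z ↔ w <+: v ∨ ∃ j ≤ n, w = v ++ a :: replicate j z := by
  constructor
  · intro hw
    rcases le_or_gt w.length v.length with hl | hl
    · left
      rw [prefix_iff_eq_take, take_append_of_le_length hl] at hw
      exact hw ▸ take_prefix _ _
    · right
      obtain ⟨j, hj⟩ : ∃ j, w.length = v.length + (j + 1) := ⟨w.length - v.length - 1, by omega⟩
      have hjn : j ≤ n := by have := hw.length_le; simp at this; omega
      rw [prefix_iff_eq_take, hj, take_length_add_append, take_succ_cons, take_replicate,
        min_eq_left hjn] at hw
      exact ⟨j, hjn, hw⟩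
  · rintro (hw | ⟨j, hjn, rfl⟩)
    · exact hw.trans (prefix_append _ _)
    · rw [prefix_append_right_inj, cons_prefix_cons, prefix_replicate_iff]
      simpa using hjn

end List

theorem commonPrefixLen_append_cons_of_ne (p : List ℕ) {a c : ℕ} (hac : a ≠ c) (s t : List ℕ) :
    commonPrefixLen (p ++ a :: s) (p ++ c :: t) = p.length := by
  induction p with
  | nil => simp [commonPrefixLen, hac]
  | cons x p ih => simp [commonPrefixLen, ih]

theorem Finset.mem_iff_lt_card_of_succ_mem {s : Finset ℕ} (h : ∀ c, c + 1 ∈ s → c ∈ s) (c : ℕ) :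
    c ∈ s ↔ c < s.card := by
  have down : ∀ c d, c ≤ d → d ∈ s → c ∈ s := fun c d hcd =>
    Nat.le_induction id (fun d _ ih hd => ih (h d hd)) d hcd
  constructor
  · intro hc
    have hsub : Finset.range (c + 1) ⊆ s := fun x hx =>
      down x c (Nat.lt_succ_iff.1 (Finset.mem_range.1 hx)) hc
    simpa using Finset.card_le_card hsub
  · intro hc
    by_contra hcs
    have hsub : s ⊆ Finset.range c := fun x hx =>
      Finset.mem_range.2 (lt_of_not_ge fun hcx => hcs (down c x hcx hx))
    simpa using hc.trans_le (Finset.card_le_card hsub)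

theorem mem_iff_lt_degreeOf {τ : Finset (List ℕ)} {v : List ℕ}
    (h : ∀ c, v ++ [c + 1] ∈ τ → v ++ [c] ∈ τ) (c : ℕ) : v ++ [c] ∈ τ ↔ c < degreeOf τ v := by
  have hinj : Function.Injective fun c : ℕ => v ++ [c] := fun c d hcd => by simpa using hcd
  have hcard : degreeOf τ v = (τ.preimage _ hinj.injOn).card := by
    rw [Finset.card_preimage, degreeOf]
    congr 1
    exact Finset.filter_congr fun w _ => by simp [eq_comm]
  rw [hcard, ← Finset.mem_iff_lt_card_of_succ_mem (by simpa using h), Finset.mem_preimage]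

theorem rightmostAt_eq {τ : Finset (List ℕ)} {n : ℕ} {v : List ℕ} (hv : v ∈ τ)
    (hvn : v.length = n) (hmax : ∀ w ∈ τ, w.length = n → w ≤ v) : rightmostAt τ n = v := by
  have hfilter : (τ.filter fun w => w.length = n).max = v := by
    refine le_antisymm (Finset.max_le fun w hw => ?_)
      (Finset.le_max (Finset.mem_filter.2 ⟨hv, hvn⟩))
    rw [Finset.mem_filter] at hw
    exact WithBot.coe_le_coe.2 (hmax w hw.1 hw.2)
  rw [rightmostAt, hfilter, WithBot.unbotD_coe]

theorem leavesOf_eq_of_forall_mem_iff {s F : Finset (List ℕ)}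
    (hs : ∀ w, w ∈ s ↔ ∃ u ∈ F, w <+: u) (hF : ∀ u ∈ F, ∀ u' ∈ F, u <+: u' → u = u') :
    leavesOf s = F := by
  ext w
  simp only [leavesOf, Finset.mem_filter]
  constructor
  · rintro ⟨hw, hmax⟩
    obtain ⟨u, hu, hwu⟩ := (hs w).1 hw
    rwa [← hmax u ((hs u).2 ⟨u, hu, List.prefix_refl u⟩) hwu]
  · intro hw
    refine ⟨(hs w).2 ⟨w, hw, List.prefix_refl w⟩, fun u hu hwu => ?_⟩
    obtain ⟨u', hu', huu'⟩ := (hs u).1 hu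
    obtain rfl := hF w hw u' hu' (hwu.trans huu')
    exact (hwu.eq_of_length (le_antisymm hwu.length_le huu'.length_le)).symm

theorem leafVec_eq_of_strictMono {τ : Finset (List ℕ)} {k : ℕ} (h : (leavesOf τ).card = k)
    {f : Fin k → List ℕ} (hf : StrictMono f) (hmem : ∀ j, f j ∈ leavesOf τ) (j : Fin k) :
    leafVec τ h j = f j := by
  rw [leafVec, Finset.coe_orderIsoOfFin_apply,
    ← Finset.orderEmbOfFin_unique' h (f := OrderEmbedding.ofStrictMono f hf) hmem]
  rfl

def IsGlueData (ℓ b : ℕ → ℕ) (n : ℕ) : Prop :=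
  ∀ t < n, b t < min (ℓ t) (ℓ (t + 1))

theorem IsGlueData.mono {ℓ b : ℕ → ℕ} {m n : ℕ} (h : IsGlueData ℓ b n) (hmn : m ≤ n) :
    IsGlueData ℓ b m :=
  fun t ht => h t (ht.trans_le hmn)

def glueLeaf (ℓ b : ℕ → ℕ) : ℕ → List ℕ
  | 0 => List.replicate (ℓ 0) 0
  | i + 1 =>
      (glueLeaf ℓ b i).take (b i) ++
        ((glueLeaf ℓ b i).getD (b i) 0 + 1) :: List.replicate (ℓ (i + 1) - b i - 1) 0

def glueVertices (ℓ b : ℕ → ℕ) (i : ℕ) : Finset (List ℕ) :=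
  (Finset.range (i + 1)).biUnion fun j => (glueLeaf ℓ b j).inits.toFinset

section Glue

variable {ℓ b : ℕ → ℕ} {i j : ℕ}

theorem length_glueLeaf (H : IsGlueData ℓ b i) : (glueLeaf ℓ b i).length = ℓ i := by
  induction i with
  | zero => simp [glueLeaf]
  | succ i ih =>
    have hi := H i i.lt_succ_self
    simp only [glueLeaf, List.length_append, List.length_take, List.length_cons,
      List.length_replicate, ih (H.mono i.le_succ)]
    omega

theorem lt_length_glueLeaf (H : IsGlueData ℓ b (i + 1)) : b i < (glueLeaf ℓ b i).length := by
  rw [length_glueLeaf (H.mono i.le_succ)]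
  exact lt_min_iff.1 (H i i.lt_succ_self) |>.1

theorem exists_glueLeaf_eq_append_cons (H : IsGlueData ℓ b (i + 1)) :
    ∃ V e s, V.length = b i ∧ glueLeaf ℓ b i = V ++ e :: s ∧
      glueLeaf ℓ b (i + 1) = V ++ (e + 1) :: List.replicate (ℓ (i + 1) - b i - 1) 0 := by
  have hi := lt_length_glueLeaf H
  exact ⟨_, _, _, by simpa using hi.le, List.eq_take_append_getD_cons_drop 0 hi, rfl⟩

theorem branchesLeft_glueLeaf_succ (H : IsGlueData ℓ b (i + 1)) :
    (glueLeaf ℓ b i).BranchesLeft (glueLeaf ℓ b (i + 1)) := by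
  obtain ⟨V, e, s, -, hi, hi1⟩ := exists_glueLeaf_eq_append_cons H
  exact ⟨V, e, e + 1, s, _, e.lt_succ_self, hi, hi1⟩

theorem branchesLeft_glueLeaf {j' : ℕ} (H : IsGlueData ℓ b j') (hjj' : j < j') :
    (glueLeaf ℓ b j).BranchesLeft (glueLeaf ℓ b j') := by
  induction j', hjj' using Nat.le_induction with
  | base => exact branchesLeft_glueLeaf_succ H
  | succ j' hj' ih =>
    exact (ih (H.mono j'.le_succ)).trans (branchesLeft_glueLeaf_succ H)

theorem take_glueLeaf_le (H : IsGlueData ℓ b i) (hj : j ≤ i) (n : ℕ) :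
    (glueLeaf ℓ b j).take n ≤ (glueLeaf ℓ b i).take n := by
  rcases hj.eq_or_lt with rfl | hj
  · exact le_rfl
  · exact (branchesLeft_glueLeaf H hj).take_le n

theorem glueLeaf_isPrefix_glueLeaf_iff (H : IsGlueData ℓ b i) {j' : ℕ} (hj : j ≤ i)
    (hj' : j' ≤ i) : glueLeaf ℓ b j <+: glueLeaf ℓ b j' ↔ j = j' := by
  refine ⟨fun hpre => ?_, by rintro rfl; exact List.prefix_refl _⟩
  rcases lt_trichotomy j j' with h | rfl | h
  · exact absurd hpre (branchesLeft_glueLeaf (H.mono hj') h).not_isPrefix.1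
  · rfl
  · exact absurd hpre (branchesLeft_glueLeaf (H.mono hj) h).not_isPrefix.2

theorem exists_isPrefix_glueLeaf_of_succ (H : IsGlueData ℓ b j) {v : List ℕ} {c : ℕ}
    (h : v ++ [c + 1] <+: glueLeaf ℓ b j) : ∃ j' ≤ j, v ++ [c] <+: glueLeaf ℓ b j' := by
  induction j with
  | zero =>
    have := List.eq_of_mem_replicate (h.subset (by simp) : c + 1 ∈ List.replicate (ℓ 0) 0)
    omega
  | succ j ih =>
    obtain ⟨V, e, s, -, hj, hj1⟩ := exists_glueLeaf_eq_append_cons H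
    rw [hj1, List.isPrefix_append_cons_replicate_iff] at h
    rcases h with h | ⟨_ | k, -, heq⟩
    · obtain ⟨j', hj', hpre⟩ := ih (H.mono j.le_succ) (h.trans (hj ▸ List.prefix_append _ _))
      exact ⟨j', hj'.trans j.le_succ, hpre⟩
    · obtain ⟨rfl, rfl⟩ : v = V ∧ c = e := by simpa using heq
      exact ⟨j, j.le_succ, hj ▸ List.append_singleton_prefix_append_cons _ _ _⟩
    · rw [List.replicate_succ', ← List.cons_append, ← List.append_assoc] at heq
      simpa using (List.append_inj' heq rfl).2

theorem mem_glueVertices {w : List ℕ} :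
    w ∈ glueVertices ℓ b i ↔ ∃ j ≤ i, w <+: glueLeaf ℓ b j := by
  simp [glueVertices]

theorem append_mem_glueVertices_of_succ (H : IsGlueData ℓ b i) {v : List ℕ} {c : ℕ}
    (h : v ++ [c + 1] ∈ glueVertices ℓ b i) : v ++ [c] ∈ glueVertices ℓ b i := by
  obtain ⟨j, hj, hpre⟩ := mem_glueVertices.1 h
  obtain ⟨j', hj', hpre'⟩ := exists_isPrefix_glueLeaf_of_succ (H.mono hj) hpre
  exact mem_glueVertices.2 ⟨j', hj'.trans hj, hpre'⟩

theorem isPlanarTree_glueVertices (H : IsGlueData ℓ b i) : IsPlanarTree (glueVertices ℓ b i) := by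
  refine ⟨mem_glueVertices.2 ⟨0, i.zero_le, List.nil_prefix⟩, fun v w hvw hw => ?_,
    fun v => ⟨_, mem_iff_lt_degreeOf fun c => append_mem_glueVertices_of_succ H⟩⟩
  obtain ⟨j, hj, hwj⟩ := mem_glueVertices.1 hw
  exact mem_glueVertices.2 ⟨j, hj, hvw.trans hwj⟩

theorem leavesOf_glueVertices (H : IsGlueData ℓ b i) :
    leavesOf (glueVertices ℓ b i) = (Finset.range (i + 1)).image (glueLeaf ℓ b) := by
  refine leavesOf_eq_of_forall_mem_iff (fun w => by simp [mem_glueVertices]) ?_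
  simp only [Finset.mem_image, Finset.mem_range, Nat.lt_succ_iff]
  rintro _ ⟨j, hj, rfl⟩ _ ⟨j', hj', rfl⟩ hpre
  rw [(glueLeaf_isPrefix_glueLeaf_iff H hj hj').1 hpre]

theorem card_leavesOf_glueVertices (H : IsGlueData ℓ b i) :
    (leavesOf (glueVertices ℓ b i)).card = i + 1 := by
  rw [leavesOf_glueVertices H, Finset.card_image_of_injOn, Finset.card_range]
  intro j hj j' hj' heq
  simp only [Finset.coe_range, Set.mem_Iio, Nat.lt_succ_iff] at hj hj'
  exact (glueLeaf_isPrefix_glueLeaf_iff H hj hj').1 (heq ▸ List.prefix_refl _)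

theorem leafVec_glueVertices (H : IsGlueData ℓ b i)
    (h : (leavesOf (glueVertices ℓ b i)).card = i + 1) (j : Fin (i + 1)) :
    leafVec (glueVertices ℓ b i) h j = glueLeaf ℓ b j :=
  leafVec_eq_of_strictMono h
    (fun _ _ hjj' => (branchesLeft_glueLeaf (H.mono (Fin.is_le _)) hjj').lt)
    (fun j => leavesOf_glueVertices H ▸ Finset.mem_image_of_mem _ (Finset.mem_range.2 j.2)) j

theorem rightmostAt_glueVertices (H : IsGlueData ℓ b i) {V : List ℕ}
    (hV : V <+: glueLeaf ℓ b i) : rightmostAt (glueVertices ℓ b i) V.length = V := by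
  refine rightmostAt_eq (mem_glueVertices.2 ⟨i, le_rfl, hV⟩) rfl fun w hw hwn => ?_
  obtain ⟨j, hj, hwj⟩ := mem_glueVertices.1 hw
  rw [List.prefix_iff_eq_take] at hwj hV
  rw [hwj, hV, hwn]
  exact take_glueLeaf_le H hj _

theorem degreeOf_glueVertices (H : IsGlueData ℓ b i) {V : List ℕ} {e : ℕ}
    (hVe : V ++ [e] <+: glueLeaf ℓ b i) : degreeOf (glueVertices ℓ b i) V = e + 1 := by
  have hdeg := mem_iff_lt_degreeOf fun c => append_mem_glueVertices_of_succ (v := V) H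
  have hle : ∀ c, V ++ [c] ∈ glueVertices ℓ b i → c ≤ e := fun c hc => by
    obtain ⟨j, hj, hVc⟩ := mem_glueVertices.1 hc
    rw [List.prefix_iff_eq_take] at hVc hVe
    apply List.le_of_append_singleton_le
    rw [hVc, hVe]
    simpa using take_glueLeaf_le H hj (V.length + 1)
  have he := (hdeg e).1 (mem_glueVertices.2 ⟨i, le_rfl, hVe⟩)
  have hnot : ¬e + 1 < degreeOf (glueVertices ℓ b i) V := fun h => by
    have := hle _ ((hdeg _).2 h)
    omega
  omega

theorem mem_branchFrom {v w : List ℕ} {a n : ℕ} :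
    w ∈ branchFrom v a (n + 1) ↔ ∃ j ≤ n, w = v ++ a :: List.replicate j 0 := by
  simp [branchFrom, eq_comm]

theorem glueVertices_succ {V s : List ℕ} {e : ℕ} (hb : b i < ℓ (i + 1))
    (hi : glueLeaf ℓ b i = V ++ e :: s)
    (hi1 : glueLeaf ℓ b (i + 1) = V ++ (e + 1) :: List.replicate (ℓ (i + 1) - b i - 1) 0) :
    glueVertices ℓ b (i + 1) = glueVertices ℓ b i ∪ branchFrom V (e + 1) (ℓ (i + 1) - b i) := by
  obtain ⟨n, hn⟩ : ∃ n, ℓ (i + 1) - b i = n + 1 := ⟨_, (Nat.succ_pred_eq_of_pos (by omega)).symm⟩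
  rw [hn] at hi1 ⊢
  rw [Nat.add_sub_cancel] at hi1
  ext w
  rw [Finset.mem_union, mem_glueVertices, mem_glueVertices, mem_branchFrom]
  constructor
  · rintro ⟨j, hj, hwj⟩
    rcases hj.lt_or_eq with hj | rfl
    · exact Or.inl ⟨j, Nat.lt_succ_iff.1 hj, hwj⟩
    rw [hi1, List.isPrefix_append_cons_replicate_iff] at hwj
    exact hwj.imp_left fun hwV => ⟨i, le_rfl, hwV.trans (hi ▸ List.prefix_append _ _)⟩
  · rintro (⟨j, hj, hwj⟩ | hw)
    · exact ⟨j, hj.trans i.le_succ, hwj⟩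
    · exact ⟨i + 1, le_rfl, hi1 ▸ List.isPrefix_append_cons_replicate_iff.2 (Or.inr hw)⟩

theorem glueTree_eq_glueVertices (H : IsGlueData ℓ b i) : glueTree ℓ b i = glueVertices ℓ b i := by
  induction i with
  | zero =>
    ext w
    simp only [glueTree, List.mem_toFinset, List.mem_map, List.mem_range, Nat.lt_succ_iff,
      mem_glueVertices, nonpos_iff_eq_zero, exists_eq_left, glueLeaf, List.prefix_replicate_iff]
    exact ⟨fun ⟨j, hj, hw⟩ => hw ▸ by simpa using hj, fun ⟨hw, hw'⟩ => ⟨_, hw, hw'.symm⟩⟩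
  | succ i ih =>
    obtain ⟨V, e, s, hV, hi, hi1⟩ := exists_glueLeaf_eq_append_cons H
    have hVe : V ++ [e] <+: glueLeaf ℓ b i := hi ▸ List.append_singleton_prefix_append_cons _ _ _
    have Hi := H.mono i.le_succ
    have hb : b i < ℓ (i + 1) := (lt_min_iff.1 (H i i.lt_succ_self)).2
    rw [glueTree, ih Hi, ← hV, rightmostAt_glueVertices Hi ((List.prefix_append V [e]).trans hVe),
      degreeOf_glueVertices Hi hVe, hV, glueVertices_succ hb hi hi1]

theorem commonPrefixLen_glueLeaf_succ (H : IsGlueData ℓ b (i + 1)) :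
    commonPrefixLen (glueLeaf ℓ b i) (glueLeaf ℓ b (i + 1)) = b i := by
  obtain ⟨V, e, s, hV, hi, hi1⟩ := exists_glueLeaf_eq_append_cons H
  rw [hi, hi1, commonPrefixLen_append_cons_of_ne V (Nat.succ_ne_self e).symm, hV]

end Glue

/-- **Consistency of the gluing construction** (surjectivity of the point-process
encoding). Given data `(ℓ, b) ∈ ℕ^k × ℕ^{k-1}` with `b i < min (ℓ i, ℓ (i+1))`, after
step `i` of the iterative construction the resulting object is a planar tree with
exactly `i + 1` leaves, whose leaf heights are `ℓ 0, …, ℓ i` and whose consecutive-MRCA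
heights are `b 0, …, b (i-1)`. -/
theorem glueTree_spec (k : ℕ) (ℓ b : ℕ → ℕ)
    (hb : ∀ i, i + 1 < k → b i < min (ℓ i) (ℓ (i + 1))) :
    ∀ i, i < k →
      IsPlanarTree (glueTree ℓ b i) ∧
      ∃ h : (leavesOf (glueTree ℓ b i)).card = i + 1,
        (∀ j : Fin (i + 1), (leafVec (glueTree ℓ b i) h j).length = ℓ j.1) ∧
        ∀ j : Fin i,
          commonPrefixLen
              (leafVec (glueTree ℓ b i) h ⟨j.1, by have := j.2; omega⟩)
              (leafVec (glueTree ℓ b i) h ⟨j.1 + 1, by have := j.2; omega⟩)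
            = b j.1 := by
  intro i hik
  have H : IsGlueData ℓ b i := fun t ht => hb t (by omega)
  rw [glueTree_eq_glueVertices H]
  refine ⟨isPlanarTree_glueVertices H, card_leavesOf_glueVertices H, fun j => ?_, fun j => ?_⟩
  · rw [leafVec_glueVertices H, length_glueLeaf (H.mono j.is_le)]
  · rw [leafVec_glueVertices H, leafVec_glueVertices H]
    exact commonPrefixLen_glueLeaf_succ (H.mono j.2)

end
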